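/- arXiv:1411.6973 — 4 statements merged into one kernel-verified Lean document; each statement's English description precedes it below -/
import Mathlib

section
/- Let α, β, κ, g, ι, G > 0 with β = 3k/α for some k > 0. If (16/81)(α − κg)³ ≥ k κ² (ι + r^oc·G)², where r^oc = √(4α/(3k)), then there exists χ > 0 such that (αβ/4)χ³ − (α − κg)χ + κ(ι + r^oc·G) ≤ 0; moreover the choice χ = √((4/(9k))(α − κg)) works. -/
/-!
With `a = αβ/4 = 3k/4`, the cubic `a χ³ - A χ + c` (where `A = α - κg`) attains its minimum over
`χ > 0` at the critical point `χ = √(A / (3a)) = √(4A / (9k))`, where `a χ³ = A χ / 3`, so the value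
there is `c - (2/3) A χ`. Squaring, this is nonpositive exactly when `27 a c² ≤ 4 A³`, which for
`c = κ(ι + r^oc G)` is the hypothesis.
-/

open Real

theorem cubic_nonpos_at_sqrt_of_discriminant {a A c : ℝ} (ha : 0 < a) (hA : 0 ≤ A)
    (hc : 27 * a * c ^ 2 ≤ 4 * A ^ 3) :
    a * √(A / (3 * a)) ^ 3 - A * √(A / (3 * a)) + c ≤ 0 := by
  set χ := √(A / (3 * a))
  have hχ : 0 ≤ χ := sqrt_nonneg _
  have hχsq : χ ^ 2 = A / (3 * a) := sq_sqrt (by positivity)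
  have hcubic : a * χ ^ 3 = A * χ / 3 := by
    rw [pow_succ, hχsq]; field_simp
  have hbound : c ≤ 2 / 3 * A * χ := by
    have hsq : c ^ 2 ≤ (2 / 3 * A * χ) ^ 2 := by
      rw [mul_pow, hχsq]
      calc c ^ 2 ≤ 4 * A ^ 3 / (27 * a) := by rw [le_div_iff₀' (by positivity)]; exact hc
        _ = _ := by field_simp; ring
    exact (le_abs_self c).trans (abs_le_of_sq_le_sq hsq (by positivity))
  linarith

theorem invariance_cubic_condition_general
    (α β κ g ι G k : ℝ)
    (hα : 0 < α) (hκ : 0 < κ) (hι : 0 < ι) (hG : 0 < G)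
    (hk : 0 < k) (hβk : β = 3 * k / α)
    (hcond : (16 / 81) * (α - κ * g) ^ 3 ≥
      k * κ ^ 2 * (ι + Real.sqrt (4 * α / (3 * k)) * G) ^ 2) :
    (∃ χ : ℝ, 0 < χ ∧
      (α * β / 4) * χ ^ 3 - (α - κ * g) * χ +
        κ * (ι + Real.sqrt (4 * α / (3 * k)) * G) ≤ 0) ∧
    (0 < Real.sqrt ((4 / (9 * k)) * (α - κ * g)) ∧
      (α * β / 4) * (Real.sqrt ((4 / (9 * k)) * (α - κ * g))) ^ 3 -
        (α - κ * g) * Real.sqrt ((4 / (9 * k)) * (α - κ * g)) +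
        κ * (ι + Real.sqrt (4 * α / (3 * k)) * G) ≤ 0) := by
  set A := α - κ * g
  set c := κ * (ι + √(4 * α / (3 * k)) * G)
  have hc : 0 < c := by positivity
  have hcond' : k * c ^ 2 ≤ 16 / 81 * A ^ 3 := by rw [mul_pow]; linarith
  have hA : 0 < A :=
    (Odd.pow_pos_iff (n := 3) (by decide)).mp (by linarith [mul_pos hk (pow_pos hc 2)])
  have ha : α * β / 4 = 3 * k / 4 := by rw [hβk]; field_simp
  have hχ : 4 / (9 * k) * A = A / (3 * (α * β / 4)) := by rw [ha]; field_simp; ring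
  have hχpos : 0 < √(4 / (9 * k) * A) := sqrt_pos.mpr (by positivity)
  have hdisc : 27 * (α * β / 4) * c ^ 2 ≤ 4 * A ^ 3 := by
    rw [ha]; linarith
  have hval := cubic_nonpos_at_sqrt_of_discriminant (by rw [ha]; positivity) hA.le hdisc
  rw [← hχ] at hval
  exact ⟨⟨_, hχpos, hval⟩, hχpos, hval⟩

theorem invariance_cubic_condition
    (α β κ g ι G k : ℝ)
    (hα : 0 < α) (hβ : 0 < β) (hκ : 0 < κ) (hg : 0 < g) (hι : 0 < ι) (hG : 0 < G)
    (hk : 0 < k) (hβk : β = 3 * k / α)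
    (hcond : (16 / 81) * (α - κ * g) ^ 3 ≥
      k * κ ^ 2 * (ι + Real.sqrt (4 * α / (3 * k)) * G) ^ 2) :
    (∃ χ : ℝ, 0 < χ ∧
      (α * β / 4) * χ ^ 3 - (α - κ * g) * χ +
        κ * (ι + Real.sqrt (4 * α / (3 * k)) * G) ≤ 0) ∧
    (0 < Real.sqrt ((4 / (9 * k)) * (α - κ * g)) ∧
      (α * β / 4) * (Real.sqrt ((4 / (9 * k)) * (α - κ * g))) ^ 3 -
        (α - κ * g) * Real.sqrt ((4 / (9 * k)) * (α - κ * g)) +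
        κ * (ι + Real.sqrt (4 * α / (3 * k)) * G) ≤ 0) :=
  invariance_cubic_condition_general α β κ g ι G k hα hκ hι hG hk hβk hcond
end

section
/- Let r_eq = √((2α + 2√(α² − 6kκP))/(3k)) be the high-voltage equilibrium amplitude, where α, k, κ > 0 and 0 < κP < α²/(6k). Then α(1 − (3β/4)r_eq²) < 0, where β = 3k/α; i.e., the high-voltage equilibrium satisfies r_eq > √(4/(3β)) = 2/√(3β). -/
theorem high_voltage_root_above_inflection
    (α k κ P β : ℝ) (hα : 0 < α) (hk : 0 < k) (hκ : 0 < κ)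
    (hP : 0 < κ * P) (hload : κ * P < α ^ 2 / (6 * k))
    (hβ : β = 3 * k / α) :
    let r_eq := Real.sqrt ((2 * α + 2 * Real.sqrt (α ^ 2 - 6 * k * (κ * P))) / (3 * k))
    α * (1 - (3 * β / 4) * r_eq ^ 2) < 0 ∧ r_eq > 2 / Real.sqrt (3 * β) := by
  intro r_eq
  have hD : 0 < α ^ 2 - 6 * k * (κ * P) := by
    nlinarith [(lt_div_iff₀ (by positivity : (0:ℝ) < 6 * k)).mp hload]
  have hsD : 0 < Real.sqrt (α ^ 2 - 6 * k * (κ * P)) := Real.sqrt_pos.mpr hD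
  have harg : 0 ≤ (2 * α + 2 * Real.sqrt (α ^ 2 - 6 * k * (κ * P))) / (3 * k) := by
    positivity
  have hr2 : r_eq ^ 2 = (2 * α + 2 * Real.sqrt (α ^ 2 - 6 * k * (κ * P))) / (3 * k) :=
    Real.sq_sqrt harg
  have hβpos : 0 < 3 * β := by rw [hβ]; positivity
  constructor
  · rw [hr2, hβ]
    have h1 : (3 * (3 * k / α) / 4) * ((2 * α + 2 * Real.sqrt (α ^ 2 - 6 * k * (κ * P))) / (3 * k))
        = 3 * (α + Real.sqrt (α ^ 2 - 6 * k * (κ * P))) / (2 * α) := by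
      field_simp; ring
    rw [h1]
    have h2 : 1 < 3 * (α + Real.sqrt (α ^ 2 - 6 * k * (κ * P))) / (2 * α) := by
      rw [lt_div_iff₀ (by positivity)]
      nlinarith
    nlinarith
  · have h4 : (2 : ℝ) / Real.sqrt (3 * β) = Real.sqrt (4 / (3 * β)) := by
      rw [Real.sqrt_div (by norm_num : (0:ℝ) ≤ 4),
        show (4:ℝ) = 2 ^ 2 by norm_num, Real.sqrt_sq (by norm_num : (0:ℝ) ≤ 2)]
    rw [gt_iff_lt, h4]
    refine Real.sqrt_lt_sqrt (by positivity) ?_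
    rw [hβ, div_lt_div_iff₀ (by positivity) (by positivity),
      show (2 * α + 2 * Real.sqrt (α ^ 2 - 6 * k * (κ * P))) * (3 * (3 * k / α))
        = ((2 * α + 2 * Real.sqrt (α ^ 2 - 6 * k * (κ * P))) * (9 * k)) / α by ring,
      lt_div_iff₀ hα]
    nlinarith [mul_pos hk hsD]
end

section
/- Let the quartic q(r) = (αβ/8)r⁴ − (α/2)r² + κP with α, β, κ > 0 and 0 < κP < α/(2β). At the high-voltage positive root r_eq of q, the derivative of power with respect to amplitude satisfies κ·dP/dr |_{r=r_eq} = α(r_eq − (β/2)r_eq³) < 0. -/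
/-! Above the local maximum of the power curve `r ↦ (α/2) r² - (αβ/8) r⁴`, which sits at
`r² = 2/β`, the power decreases with the amplitude. The high-voltage root has
`r_eq² = (2α + 2√D)/(αβ)` with discriminant `D = α² - 2αβκP > 0` exactly when `κP < α/(2β)`,
so `r_eq² > 2α/(αβ) = 2/β`. -/

theorem hasDerivAt_power_of_amplitude (α β r : ℝ) :
    HasDerivAt (fun r : ℝ => (α / 2) * r ^ 2 - (α * β / 8) * r ^ 4)
      (α * (r - (β / 2) * r ^ 3)) r := by
  refine (((hasDerivAt_pow 2 r).const_mul (α / 2)).sub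
    ((hasDerivAt_pow 4 r).const_mul (α * β / 8))).congr_deriv ?_
  ring

theorem two_div_lt_high_root_sq {α β c : ℝ} (hα : 0 < α) (hβ : 0 < β)
    (hc : c < α / (2 * β)) :
    2 / β < (2 * α + 2 * Real.sqrt (α ^ 2 - 6 * (α * β / 3) * c)) / (3 * (α * β / 3)) := by
  have hdisc : 0 < α ^ 2 - 6 * (α * β / 3) * c := by
    have : c * (2 * β) < α := (lt_div_iff₀ (by positivity)).mp hc
    nlinarith
  have hsqrt : 0 < Real.sqrt (α ^ 2 - 6 * (α * β / 3) * c) := Real.sqrt_pos.mpr hdisc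
  calc 2 / β = 2 * α / (3 * (α * β / 3)) := by field_simp
    _ < _ := by gcongr; linarith

theorem mul_sub_cube_neg_of_two_div_lt_sq {α β r : ℝ} (hα : 0 < α) (hβ : 0 < β) (hr : 0 < r)
    (h : 2 / β < r ^ 2) : α * (r - (β / 2) * r ^ 3) < 0 := by
  have hβr : 2 < β * r ^ 2 := by rwa [div_lt_iff₀' hβ] at h
  have : α * (r - (β / 2) * r ^ 3) = -(α * r * (β * r ^ 2 - 2) / 2) := by ring
  rw [this, neg_lt_zero]
  have : 0 < β * r ^ 2 - 2 := by linarith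
  positivity

theorem power_amplitude_sensitivity_negative_at_high_voltage_root_general
    (α β κ P : ℝ) (hα : 0 < α) (hβ : 0 < β)
    (hload : κ * P < α / (2 * β)) :
    let k := α * β / 3
    let r_eq := Real.sqrt ((2 * α + 2 * Real.sqrt (α ^ 2 - 6 * k * (κ * P))) / (3 * k))
    HasDerivAt (fun r : ℝ => (α / 2) * r ^ 2 - (α * β / 8) * r ^ 4)
        (α * (r_eq - (β / 2) * r_eq ^ 3)) r_eq ∧
    α * (r_eq - (β / 2) * r_eq ^ 3) < 0 := by
  intro k r_eq
  have hroot := two_div_lt_high_root_sq hα hβ hload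
  have hpos : 0 < (2 * α + 2 * Real.sqrt (α ^ 2 - 6 * k * (κ * P))) / (3 * k) :=
    lt_trans (by positivity) hroot
  refine ⟨hasDerivAt_power_of_amplitude α β r_eq, mul_sub_cube_neg_of_two_div_lt_sq hα hβ
    (Real.sqrt_pos.mpr hpos) ?_⟩
  rwa [Real.sq_sqrt hpos.le]

theorem power_amplitude_sensitivity_negative_at_high_voltage_root
    (α β κ P : ℝ) (hα : 0 < α) (hβ : 0 < β) (hκ : 0 < κ)
    (hP : 0 < κ * P) (hload : κ * P < α / (2 * β)) :
    let k := α * β / 3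
    let r_eq := Real.sqrt ((2 * α + 2 * Real.sqrt (α ^ 2 - 6 * k * (κ * P))) / (3 * k))
    HasDerivAt (fun r : ℝ => (α / 2) * r ^ 2 - (α * β / 8) * r ^ 4)
        (α * (r_eq - (β / 2) * r_eq ^ 3)) r_eq ∧
    α * (r_eq - (β / 2) * r_eq ^ 3) < 0 :=
  power_amplitude_sensitivity_negative_at_high_voltage_root_general α β κ P hα hβ hload
end

section
/- Consider the scalar averaged amplitude dynamics dr/dt = (α/(2C))(r − (β/4)r³) − κP/(Cr) on r > 0, with α, β, C, κ > 0 and 0 < κP < α/(2β). The high-voltage equilibrium r_eq (the larger positive root of (αβ/8)r⁴ − (α/2)r² + κP = 0) is locally exponentially stable: the linearization has eigenvalue (α/(2C))(1 − (3β/4)r_eq²) + κP/(Cr_eq²) < 0. -/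
/-!
At an equilibrium `r` the load satisfies `p = (α/2)(r² − (β/4)r⁴)`, which turns the linearization
`(α/(2C))(1 − (3β/4)r²) + p/(C r²)` into `(α/(2C))(2 − β r²)`. On the high-voltage branch
`r² = (2α + 2s)/(αβ)` with `s = √(α² − 2αβp)`, so the linearization equals `−s/C`, which is negative
because the load is below the critical value `α/(2β)`.
-/

-- `p` stands for the product `κP` of the load.
noncomputable def amplitudeField (α β C p r : ℝ) : ℝ :=
  α / (2 * C) * (r - β / 4 * r ^ 3) - p / (C * r)

section Equilibrium

variable {α β C p r : ℝ}

theorem hasDerivAt_amplitudeField (hr : r ≠ 0) :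
    HasDerivAt (amplitudeField α β C p)
      (α / (2 * C) * (1 - 3 * β / 4 * r ^ 2) + p / (C * r ^ 2)) r := by
  have hcubic : HasDerivAt (fun r : ℝ => α / (2 * C) * (r - β / 4 * r ^ 3))
      (α / (2 * C) * (1 - β / 4 * (3 * r ^ 2))) r := by
    simpa using ((hasDerivAt_id r).sub ((hasDerivAt_pow 3 r).const_mul (β / 4))).const_mul
      (α / (2 * C))
  have hload : HasDerivAt (fun r : ℝ => p / C * r⁻¹) (p / C * -(r ^ 2)⁻¹) r :=
    (hasDerivAt_inv hr).const_mul (p / C)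
  have hfield : amplitudeField α β C p = fun r => α / (2 * C) * (r - β / 4 * r ^ 3) - p / C * r⁻¹ :=
    funext fun r => by rw [amplitudeField, div_mul_eq_div_div p, div_eq_mul_inv (p / C)]
  rw [hfield]
  exact (hcubic.sub hload).congr_deriv (by ring)

theorem amplitudeField_eq_zero_of_load (hp : p = α / 2 * (r ^ 2 - β / 4 * r ^ 4)) :
    amplitudeField α β C p r = 0 := by
  rw [amplitudeField, hp]
  field_simp
  ring

theorem linearization_eq_of_load (hr : r ≠ 0) (hp : p = α / 2 * (r ^ 2 - β / 4 * r ^ 4)) :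
    α / (2 * C) * (1 - 3 * β / 4 * r ^ 2) + p / (C * r ^ 2) = α / (2 * C) * (2 - β * r ^ 2) := by
  have hquot : p / (C * r ^ 2) = α / (2 * C) * (1 - β / 4 * r ^ 2) := by
    rw [hp, mul_comm C, ← div_div]
    field_simp
  rw [hquot]
  ring

end Equilibrium

section HighVoltageRoot

variable {α β p s r : ℝ}

theorem load_eq_of_sq_eq_highVoltage (hα : α ≠ 0) (hβ : β ≠ 0) (hs : s ^ 2 = α ^ 2 - 2 * α * β * p)
    (hr : r ^ 2 = (2 * α + 2 * s) / (α * β)) : p = α / 2 * (r ^ 2 - β / 4 * r ^ 4) := by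
  have hr4 : r ^ 4 = (r ^ 2) ^ 2 := by ring
  rw [hr4, hr]
  field_simp
  linear_combination 2 * hs

theorem two_sub_mul_sq_of_highVoltage (hα : α ≠ 0) (hβ : β ≠ 0)
    (hr : r ^ 2 = (2 * α + 2 * s) / (α * β)) : 2 - β * r ^ 2 = -2 * s / α := by
  rw [hr]
  field_simp
  ring

end HighVoltageRoot

theorem high_voltage_equilibrium_locally_exp_stable_general
    (α β C κ P : ℝ) (hα : 0 < α) (hβ : 0 < β) (hC : 0 < C)
    (hload : κ * P < α / (2 * β)) :
    let k := α * β / 3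
    let r_eq := Real.sqrt ((2 * α + 2 * Real.sqrt (α ^ 2 - 6 * k * (κ * P))) / (3 * k))
    let lam := (α / (2 * C)) * (1 - (3 * β / 4) * r_eq ^ 2) + κ * P / (C * r_eq ^ 2)
    ((α / (2 * C)) * (r_eq - (β / 4) * r_eq ^ 3) - κ * P / (C * r_eq) = 0) ∧
    HasDerivAt (fun r : ℝ => (α / (2 * C)) * (r - (β / 4) * r ^ 3) - κ * P / (C * r))
      lam r_eq ∧
    lam < 0 := by
  intro k r_eq lam
  have h6k : 6 * k * (κ * P) = 2 * α * β * (κ * P) := by ring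
  have h3k : 3 * k = α * β := by ring
  have hdisc : 0 < α ^ 2 - 2 * α * β * (κ * P) := by
    have hload' : κ * P * (2 * β) < α := (lt_div_iff₀ (by positivity)).mp hload
    nlinarith
  set s := Real.sqrt (α ^ 2 - 6 * k * (κ * P))
  have hs : s ^ 2 = α ^ 2 - 2 * α * β * (κ * P) := by rw [Real.sq_sqrt (by linarith), h6k]
  have hs_pos : 0 < s := Real.sqrt_pos.mpr (by linarith)
  have hr_sq : r_eq ^ 2 = (2 * α + 2 * s) / (α * β) := by
    rw [Real.sq_sqrt (by rw [h3k]; positivity), h3k]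
  have hr : r_eq ≠ 0 := (Real.sqrt_pos.mpr (by rw [h3k]; positivity)).ne'
  have hp := load_eq_of_sq_eq_highVoltage hα.ne' hβ.ne' hs hr_sq
  have hlam : lam = -s / C := by
    rw [show lam = _ from linearization_eq_of_load hr hp,
      two_sub_mul_sq_of_highVoltage hα.ne' hβ.ne' hr_sq]
    field_simp
  refine ⟨amplitudeField_eq_zero_of_load hp, hasDerivAt_amplitudeField hr, ?_⟩
  rw [hlam]
  exact div_neg_of_neg_of_pos (neg_neg_of_pos hs_pos) hC

theorem high_voltage_equilibrium_locally_exp_stable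
    (α β C κ P : ℝ) (hα : 0 < α) (hβ : 0 < β) (hC : 0 < C) (hκ : 0 < κ)
    (hP : 0 < κ * P) (hload : κ * P < α / (2 * β)) :
    let k := α * β / 3
    let r_eq := Real.sqrt ((2 * α + 2 * Real.sqrt (α ^ 2 - 6 * k * (κ * P))) / (3 * k))
    let lam := (α / (2 * C)) * (1 - (3 * β / 4) * r_eq ^ 2) + κ * P / (C * r_eq ^ 2)
    ((α / (2 * C)) * (r_eq - (β / 4) * r_eq ^ 3) - κ * P / (C * r_eq) = 0) ∧
    HasDerivAt (fun r : ℝ => (α / (2 * C)) * (r - (β / 4) * r ^ 3) - κ * P / (C * r))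
      lam r_eq ∧
    lam < 0 :=
  high_voltage_equilibrium_locally_exp_stable_general α β C κ P hα hβ hC hload
end
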